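/- In particular, in the setting of the previous theorem, the distributionally robust value function is sandwiched: (1/n)Σ_{i=1}^n v_{p̂_i}^π(s) ≥ inf_{μ∈𝔐_α(μ̂_n)} E_{p∼μ}[v_p^π(s)] ≥ (1/n)Σ_{i=1}^n v_{p̂_i}^π(s) - L_{γ,β,R_max}·α, with L_{γ,β,R_max} = βγR_max/(1-γ)². -/

import Mathlib

open MeasureTheory
open scoped BigOperators ENNReal

/-- Transition models of a finite MDP. -/
abbrev Model (S A : Type) : Type := S → A → S → ℝ

/-- `p` is a transition kernel: nonnegative and rows summing to one. -/
def IsKernel {S A : Type} [Fintype S] (p : Model S A) : Prop :=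
  ∀ s a, (∀ s', 0 ≤ p s a s') ∧ ∑ s', p s a s' = 1

/-- 1-Wasserstein distance (w.r.t. the norm `N`) between measures on models. -/
noncomputable def wassDist {S A : Type} [Fintype S] [Fintype A]
    (N : Model S A → ℝ) (μ ν : Measure (Model S A)) : ℝ :=
  sInf {c | ∃ γ : Measure (Model S A × Model S A),
    IsProbabilityMeasure γ ∧ γ.map Prod.fst = μ ∧ γ.map Prod.snd = ν ∧
    c = ∫ q, N (q.1 - q.2) ∂γ}

/-- Empirical distribution `μ̂_n = (1/n) ∑ᵢ δ_{p̂ᵢ}` over transition models. -/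
noncomputable def empiricalM {S A : Type} [Fintype S] [Fintype A]
    (n : ℕ) (phat : Fin n → Model S A) : Measure (Model S A) :=
  ((n : ℝ≥0∞)⁻¹) • ∑ i : Fin n, Measure.dirac (phat i)

/-!
The empirical measure lies in its own Wasserstein ball (the diagonal coupling has cost `0`),
which gives the upper bound. For the lower bound, subtracting the Bellman equations of two
kernels `p, q` gives `v_p - v_q = γ ((P_p - P_q) v_p + P_q (v_p - v_q))`, so `p ↦ v_p(s)` is
Lipschitz on kernels with constant `γ R_max / (1 - γ)²` for the row-sum norm, hence with
constant `L = β γ R_max / (1 - γ)²` for `N`. Integrating this bound against a coupling of `μ̂_n`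
and `μ` gives `E_{μ̂_n} v - E_μ v ≤ L W(μ̂_n, μ) ≤ L α`. Kernels form a compact set on which `v`
is continuous, which makes every integral involved finite.
-/

open Matrix

theorem Seminorm.continuous_of_finiteDimensional {E : Type*} [NormedAddCommGroup E]
    [NormedSpace ℝ E] [FiniteDimensional ℝ E] (p : Seminorm ℝ E) : Continuous p :=
  continuousOn_univ.1 (p.convexOn.continuousOn isOpen_univ)

theorem Seminorm.continuousOn_of_abs_sub_le {E : Type*} [NormedAddCommGroup E]
    [NormedSpace ℝ E] [FiniteDimensional ℝ E] (p : Seminorm ℝ E) {f : E → ℝ} {K : Set E}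
    {L : ℝ} (hL : 0 ≤ L) (hf : ∀ x ∈ K, ∀ y ∈ K, |f x - f y| ≤ L * p (x - y)) :
    ContinuousOn f K := by
  obtain ⟨C, -, hpC⟩ := p.bound_of_continuous_normedSpace p.continuous_of_finiteDimensional
  refine (LipschitzOnWith.of_dist_le' (K := L * C) fun x hx y hy => ?_).continuousOn
  calc dist (f x) (f y) ≤ L * p (x - y) := hf x hx y hy
    _ ≤ L * (C * ‖x - y‖) := by gcongr; exact hpC _
    _ = L * C * dist x y := by rw [dist_eq_norm, mul_assoc]

section StochasticMatrix

variable {m n : Type*} [Fintype m] [Fintype n]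

theorem Matrix.norm_mulVec_le_of_sum_abs_le (M : Matrix m n ℝ) {c : ℝ} (hc : 0 ≤ c)
    (hM : ∀ i, ∑ j, |M i j| ≤ c) (v : n → ℝ) : ‖M *ᵥ v‖ ≤ c * ‖v‖ := by
  refine (pi_norm_le_iff_of_nonneg (by positivity)).2 fun i => ?_
  calc ‖(M *ᵥ v) i‖ ≤ ∑ j, |M i j| * ‖v‖ := by
        refine (Finset.abs_sum_le_sum_abs _ _).trans (Finset.sum_le_sum fun j _ => ?_)
        rw [abs_mul]
        exact mul_le_mul_of_nonneg_left (norm_le_pi_norm v j) (abs_nonneg _)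
    _ ≤ c * ‖v‖ := by rw [← Finset.sum_mul]; gcongr; exact hM i

variable [DecidableEq n] {P : Matrix n n ℝ}

theorem Matrix.norm_mulVec_le_of_mem_rowStochastic (hP : P ∈ rowStochastic ℝ n) (v : n → ℝ) :
    ‖P *ᵥ v‖ ≤ ‖v‖ := by
  simpa using P.norm_mulVec_le_of_sum_abs_le zero_le_one (fun i => by
    simp_rw [abs_of_nonneg (nonneg_of_mem_rowStochastic hP), sum_row_of_mem_rowStochastic hP i,
      le_refl]) v

variable {γ : ℝ} {u v w : n → ℝ}

theorem norm_le_of_eq_add_smul_mulVec (hP : P ∈ rowStochastic ℝ n) (hγ0 : 0 ≤ γ) (hγ1 : γ < 1)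
    (hv : v = u + γ • P *ᵥ v) : ‖v‖ ≤ ‖u‖ / (1 - γ) := by
  have h : ‖v‖ ≤ ‖u‖ + γ * ‖v‖ := by
    conv_lhs => rw [hv]
    refine (norm_add_le _ _).trans (add_le_add_right ?_ _)
    rw [norm_smul, Real.norm_of_nonneg hγ0]
    exact mul_le_mul_of_nonneg_left (P.norm_mulVec_le_of_mem_rowStochastic hP v) hγ0
  rw [le_div_iff₀ (by linarith)]
  linarith

theorem norm_sub_le_of_eq_add_smul_mulVec {Q : Matrix n n ℝ} (hQ : Q ∈ rowStochastic ℝ n)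
    (hγ0 : 0 ≤ γ) (hγ1 : γ < 1) {c : ℝ} (hc : 0 ≤ c) (hPQ : ∀ i, ∑ j, |P i j - Q i j| ≤ c)
    (hv : v = u + γ • P *ᵥ v) (hw : w = u + γ • Q *ᵥ w) :
    ‖v - w‖ ≤ γ * c * ‖v‖ / (1 - γ) := by
  have hdiff : v - w = γ • ((P - Q) *ᵥ v + Q *ᵥ (v - w)) := by
    rw [sub_mulVec, mulVec_sub, smul_add, smul_sub, smul_sub]
    conv_lhs => rw [hv, hw]
    abel
  have h : ‖v - w‖ ≤ γ * (c * ‖v‖ + ‖v - w‖) := by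
    conv_lhs => rw [hdiff]
    rw [norm_smul, Real.norm_of_nonneg hγ0]
    refine mul_le_mul_of_nonneg_left ((norm_add_le _ _).trans (add_le_add ?_ ?_)) hγ0
    · exact (P - Q).norm_mulVec_le_of_sum_abs_le hc hPQ v
    · exact Q.norm_mulVec_le_of_mem_rowStochastic hQ _
  rw [le_div_iff₀ (by linarith)]
  linarith

end StochasticMatrix

def policyMatrix {S A : Type} (p : Model S A) (π : S → A) : Matrix S S ℝ :=
  Matrix.of fun s s' => p s (π s) s'

section Model

variable {S A : Type} [Fintype S]

theorem IsKernel.policyMatrix_mem_rowStochastic [DecidableEq S] {p : Model S A}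
    (hp : IsKernel p) (π : S → A) : policyMatrix p π ∈ rowStochastic ℝ S :=
  mem_rowStochastic_iff_sum.2 ⟨fun s s' => (hp s (π s)).1 s', fun s => (hp s (π s)).2⟩

theorem sum_abs_policyMatrix_sub_le [Fintype A] (p q : Model S A) (π : S → A) (s : S) :
    ∑ s', |policyMatrix p π s s' - policyMatrix q π s s'| ≤
      ∑ t, ⨆ a, ∑ s', |(p - q) t a s'| := by
  have hbdd : ∀ t, BddAbove (Set.range fun a => ∑ s', |(p - q) t a s'|) :=
    fun t => (Set.finite_range _).bddAbove
  calc ∑ s', |policyMatrix p π s s' - policyMatrix q π s s'|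
      = ∑ s', |(p - q) s (π s) s'| := rfl
    _ ≤ ⨆ a, ∑ s', |(p - q) s a s'| := le_ciSup (hbdd s) (π s)
    _ ≤ ∑ t, ⨆ a, ∑ s', |(p - q) t a s'| :=
        Finset.single_le_sum (f := fun t => ⨆ a, ∑ s', |(p - q) t a s'|)
          (fun t _ => (Finset.sum_nonneg fun _ _ => abs_nonneg _).trans
            (le_ciSup (hbdd t) (π t)))
          (Finset.mem_univ s)

theorem abs_sub_le_of_bellman [Fintype A] {r : S → A → ℝ} {Rmax γ : ℝ} (hr : ∀ s a, |r s a| ≤ Rmax)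
    (hγ0 : 0 ≤ γ) (hγ1 : γ < 1) {π : S → A} {p q : Model S A} (hp : IsKernel p)
    (hq : IsKernel q) {v w : S → ℝ}
    (hv : ∀ s, v s = r s (π s) + γ * ∑ s', p s (π s) s' * v s')
    (hw : ∀ s, w s = r s (π s) + γ * ∑ s', q s (π s) s' * w s') (s : S) :
    |v s - w s| ≤ γ * Rmax / (1 - γ) ^ 2 * ∑ t, ⨆ a, ∑ s', |(p - q) t a s'| := by
  classical
  have h1γ : 0 < 1 - γ := by linarith
  have hRmax : 0 ≤ Rmax := (abs_nonneg _).trans (hr s (π s))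
  set c := ∑ t, ⨆ a, ∑ s', |(p - q) t a s'|
  have hc : 0 ≤ c := (Finset.sum_nonneg fun _ _ => abs_nonneg _).trans
    (sum_abs_policyMatrix_sub_le p q π s)
  have hu : ‖fun s => r s (π s)‖ ≤ Rmax := (pi_norm_le_iff_of_nonneg hRmax).2 fun s => hr s (π s)
  have hv' : v = (fun s => r s (π s)) + γ • policyMatrix p π *ᵥ v := funext hv
  have hw' : w = (fun s => r s (π s)) + γ • policyMatrix q π *ᵥ w := funext hw
  have hvn : ‖v‖ ≤ Rmax / (1 - γ) :=
    (norm_le_of_eq_add_smul_mulVec (hp.policyMatrix_mem_rowStochastic π) hγ0 hγ1 hv').trans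
      (by gcongr)
  calc |v s - w s| ≤ ‖v - w‖ := norm_le_pi_norm (v - w) s
    _ ≤ γ * c * ‖v‖ / (1 - γ) :=
        norm_sub_le_of_eq_add_smul_mulVec (hq.policyMatrix_mem_rowStochastic π) hγ0 hγ1 hc
          (sum_abs_policyMatrix_sub_le p q π) hv' hw'
    _ ≤ γ * c * (Rmax / (1 - γ)) / (1 - γ) := by gcongr
    _ = γ * Rmax / (1 - γ) ^ 2 * c := by field_simp

theorem IsKernel.norm_le_one [Fintype A] {p : Model S A} (hp : IsKernel p) : ‖p‖ ≤ 1 := by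
  refine pi_norm_le_iff_of_nonneg zero_le_one |>.2 fun s => ?_
  refine pi_norm_le_iff_of_nonneg zero_le_one |>.2 fun a => ?_
  refine pi_norm_le_iff_of_nonneg zero_le_one |>.2 fun s' => ?_
  rw [Real.norm_of_nonneg ((hp s a).1 s'), ← (hp s a).2]
  exact Finset.single_le_sum (fun t _ => (hp s a).1 t) (Finset.mem_univ s')

theorem isCompact_setOf_isKernel [Fintype A] : IsCompact {p : Model S A | IsKernel p} := by
  refine Metric.isCompact_of_isClosed_isBounded ?_
    (Metric.isBounded_closedBall (x := 0) (r := 1) |>.subset fun p hp => ?_)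
  · simp only [IsKernel, Set.ofPred_forall, Set.ofPred_and]
    refine isClosed_iInter fun s => isClosed_iInter fun a =>
      (isClosed_iInter fun s' => isClosed_le ?_ ?_).inter (isClosed_eq ?_ ?_) <;> fun_prop
  · simpa using IsKernel.norm_le_one hp

end Model

section Coupling

variable {X : Type*} [MeasurableSpace X]

theorem integral_sub_integral_le_of_coupling {μ ν : Measure X} {κ : Measure (X × X)}
    (hμ : κ.map Prod.fst = μ) (hν : κ.map Prod.snd = ν) {f : X → ℝ} (hfμ : Integrable f μ)
    (hfν : Integrable f ν) {c : X × X → ℝ} (hc : Integrable c κ)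
    (hfc : ∀ᵐ q ∂κ, f q.1 - f q.2 ≤ c q) :
    ∫ x, f x ∂μ - ∫ x, f x ∂ν ≤ ∫ q, c q ∂κ := by
  subst hμ hν
  have hf₁ := hfμ.comp_measurable measurable_fst
  have hf₂ := hfν.comp_measurable measurable_snd
  rw [integral_map measurable_fst.aemeasurable hfμ.1,
    integral_map measurable_snd.aemeasurable hfν.1]
  calc ∫ q, f q.1 ∂κ - ∫ q, f q.2 ∂κ = ∫ q, (f q.1 - f q.2) ∂κ := (integral_sub hf₁ hf₂).symm
    _ ≤ ∫ q, c q ∂κ := integral_mono_ae (hf₁.sub hf₂) hc hfc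

variable [TopologicalSpace X] [OpensMeasurableSpace X] [T2Space X]

theorem integrable_of_ae_mem_of_continuousOn {K : Set X} (hK : IsCompact K) {f : X → ℝ}
    (hf : ContinuousOn f K) {μ : Measure X} [IsFiniteMeasure μ] (hμ : ∀ᵐ x ∂μ, x ∈ K) :
    Integrable f μ :=
  Measure.restrict_eq_self_of_ae_mem hμ ▸ hf.integrableOn_compact hK

end Coupling

section Wasserstein

variable {S A : Type} [Fintype S] [Fintype A]

-- Not found by instance search through the nested function types.
instance : OpensMeasurableSpace (Model S A × Model S A) := Prod.opensMeasurableSpace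

theorem wassDist_self (N : Seminorm ℝ (Model S A)) (μ : Measure (Model S A))
    [IsProbabilityMeasure μ] : wassDist N μ μ = 0 := by
  have hdiag : Measurable fun p : Model S A => (p, p) := measurable_id.prodMk measurable_id
  have hcost (κ : Measure (Model S A × Model S A)) : 0 ≤ ∫ q, N (q.1 - q.2) ∂κ :=
    integral_nonneg fun q => apply_nonneg N _
  refine le_antisymm (csInf_le ⟨0, ?_⟩ ⟨μ.map fun p => (p, p), ?_, ?_, ?_, ?_⟩)
    (Real.sInf_nonneg ?_)
  · rintro _ ⟨κ, -, -, -, rfl⟩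
    exact hcost κ
  · exact Measure.isProbabilityMeasure_map hdiag.aemeasurable
  · simp [Measure.map_map measurable_fst hdiag, Function.comp_def]
  · simp [Measure.map_map measurable_snd hdiag, Function.comp_def]
  · rw [integral_map hdiag.aemeasurable]
    · simp
    · exact (N.continuous_of_finiteDimensional.comp
        (continuous_fst.sub continuous_snd)).aestronglyMeasurable
  · rintro _ ⟨κ, -, -, -, rfl⟩
    exact hcost κ

theorem integral_sub_integral_le_mul_wassDist (N : Seminorm ℝ (Model S A))
    {K : Set (Model S A)} (hK : IsCompact K) {f : Model S A → ℝ} {L : ℝ} (hL : 0 ≤ L)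
    (hf : ∀ p ∈ K, ∀ q ∈ K, |f p - f q| ≤ L * N (p - q)) {μ ν : Measure (Model S A)}
    [IsProbabilityMeasure μ] [IsProbabilityMeasure ν] (hμ : ∀ᵐ p ∂μ, p ∈ K)
    (hν : ∀ᵐ p ∂ν, p ∈ K) :
    ∫ p, f p ∂μ - ∫ p, f p ∂ν ≤ L * wassDist N μ ν := by
  have hfK : ContinuousOn f K := N.continuousOn_of_abs_sub_le hL hf
  rw [wassDist, ← smul_eq_mul, ← Real.sInf_smul_of_nonneg hL]
  refine le_csInf (Set.Nonempty.smul_set ⟨_, μ.prod ν, inferInstance, by simp, by simp, rfl⟩) ?_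
  rintro _ ⟨_, ⟨κ, hκ, hκμ, hκν, rfl⟩, rfl⟩
  dsimp only
  have hκK : ∀ᵐ q ∂κ, q ∈ K ×ˢ K := by
    filter_upwards [ae_of_ae_map measurable_fst.aemeasurable (by rwa [hκμ]),
      ae_of_ae_map measurable_snd.aemeasurable (by rwa [hκν])] with q h₁ h₂
    exact ⟨h₁, h₂⟩
  rw [smul_eq_mul, ← integral_const_mul]
  refine integral_sub_integral_le_of_coupling hκμ hκν
    (integrable_of_ae_mem_of_continuousOn hK hfK hμ)
    (integrable_of_ae_mem_of_continuousOn hK hfK hν)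
    (integrable_of_ae_mem_of_continuousOn (hK.prod hK) ?_ hκK) ?_
  · exact (continuous_const.mul (N.continuous_of_finiteDimensional.comp
      (continuous_fst.sub continuous_snd))).continuousOn
  · filter_upwards [hκK] with q hq using (le_abs_self _).trans (hf _ hq.1 _ hq.2)

end Wasserstein

section Empirical

variable {S A : Type} [Fintype S] [Fintype A] {n : ℕ} (phat : Fin n → Model S A)

theorem empiricalM_apply (s : Set (Model S A)) :
    empiricalM n phat s = (n : ℝ≥0∞)⁻¹ * ∑ i, s.indicator 1 (phat i) := by
  simp [empiricalM, Measure.dirac_apply]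

theorem isProbabilityMeasure_empiricalM (hn : 0 < n) : IsProbabilityMeasure (empiricalM n phat) :=
  ⟨by simp [empiricalM_apply, ENNReal.inv_mul_cancel (Nat.cast_ne_zero.2 hn.ne')]⟩

theorem empiricalM_eq_zero {s : Set (Model S A)} (hs : ∀ i, phat i ∉ s) :
    empiricalM n phat s = 0 := by
  simp [empiricalM_apply, hs]

theorem integral_empiricalM (f : Model S A → ℝ) :
    ∫ p, f p ∂(empiricalM n phat) = (1 / n : ℝ) * ∑ i, f (phat i) := by
  rw [empiricalM, integral_smul_measure,
    integral_finsetSum_measure fun i _ => integrable_dirac enorm_lt_top]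
  simp [integral_dirac]

end Empirical

theorem tabular_wdrmdp_sandwich_general {S A : Type} [Fintype S] [Fintype A]
    (r : S → A → ℝ) (Rmax γ β α : ℝ)
    (hr : ∀ s a, |r s a| ≤ Rmax)
    (hγ0 : 0 ≤ γ) (hγ1 : γ < 1) (hα : 0 ≤ α) (hβ : 0 ≤ β)
    (N : Model S A → ℝ)
    (hNadd : ∀ x y, N (x + y) ≤ N x + N y)
    (hNsmul : ∀ (c : ℝ) x, N (c • x) = |c| * N x)
    (hβN : ∀ p : Model S A, ∑ s, (⨆ a : A, ∑ s', |p s a s'|) ≤ β * N p)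
    (π : S → A)
    (val : Model S A → S → ℝ)
    (hval : ∀ p, IsKernel p →
      ∀ s, val p s = r s (π s) + γ * ∑ s', p s (π s) s' * val p s')
    (n : ℕ) (hn : 0 < n)
    (phat : Fin n → Model S A) (hphat : ∀ i, IsKernel (phat i))
    (s : S) :
    (1 / n : ℝ) * (∑ i : Fin n, val (phat i) s) ≥
      (⨅ μ : {μ : Measure (Model S A) //
          IsProbabilityMeasure μ ∧ μ {p : Model S A | ¬ IsKernel p} = 0 ∧
          wassDist N (empiricalM n phat) μ ≤ α},
        ∫ p, val p s ∂(μ : Measure (Model S A))) ∧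
    (⨅ μ : {μ : Measure (Model S A) //
        IsProbabilityMeasure μ ∧ μ {p : Model S A | ¬ IsKernel p} = 0 ∧
        wassDist N (empiricalM n phat) μ ≤ α},
      ∫ p, val p s ∂(μ : Measure (Model S A))) ≥
        (1 / n : ℝ) * (∑ i : Fin n, val (phat i) s) -
          β * γ * Rmax / (1 - γ) ^ 2 * α := by
  set L := β * γ * Rmax / (1 - γ) ^ 2 with hL_def
  set ball := {μ : Measure (Model S A) //
    IsProbabilityMeasure μ ∧ μ {p : Model S A | ¬ IsKernel p} = 0 ∧
    wassDist N (empiricalM n phat) μ ≤ α}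
  have hRmax : 0 ≤ Rmax := (abs_nonneg _).trans (hr s (π s))
  have hL : 0 ≤ L := by positivity
  have hlip : ∀ p ∈ {p | IsKernel p}, ∀ q ∈ {p | IsKernel p},
      |val p s - val q s| ≤ L * N (p - q) := fun p hp q hq =>
    calc |val p s - val q s|
        ≤ γ * Rmax / (1 - γ) ^ 2 * ∑ t, ⨆ a, ∑ s', |(p - q) t a s'| :=
          abs_sub_le_of_bellman hr hγ0 hγ1 hp hq (hval p hp) (hval q hq) s
      _ ≤ γ * Rmax / (1 - γ) ^ 2 * (β * N (p - q)) := by gcongr; exact hβN _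
      _ = L * N (p - q) := by rw [hL_def]; ring
  have hemp : empiricalM n phat {p | ¬ IsKernel p} = 0 :=
    empiricalM_eq_zero phat fun i hi => hi (hphat i)
  have := isProbabilityMeasure_empiricalM phat hn
  let empBall : ball :=
    ⟨_, inferInstance, hemp, (wassDist_self (Seminorm.of N hNadd hNsmul) _).trans_le hα⟩
  have hlower (μ : ball) :
      (1 / n : ℝ) * (∑ i, val (phat i) s) - L * α ≤ ∫ p, val p s ∂(μ : Measure (Model S A)) := by
    obtain ⟨μ, hμ, hμK, hdist⟩ := μ
    have h : ∫ p, val p s ∂(empiricalM n phat) - ∫ p, val p s ∂μ ≤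
        L * wassDist N (empiricalM n phat) μ :=
      integral_sub_integral_le_mul_wassDist (Seminorm.of N hNadd hNsmul) isCompact_setOf_isKernel
        hL hlip (ae_iff.2 hemp) (ae_iff.2 hμK)
    rw [integral_empiricalM] at h
    nlinarith [mul_le_mul_of_nonneg_left hdist hL]
  have : Nonempty ball := ⟨empBall⟩
  exact ⟨(ciInf_le ⟨_, Set.forall_mem_range.2 hlower⟩ empBall).trans_eq
    (integral_empiricalM phat _), le_ciInf hlower⟩

/-- sandwich bound: in the tabular Wasserstein DRMDP setting,
`(1/n) ∑ᵢ v_{p̂ᵢ}^π(s) ≥ inf_{μ ∈ 𝔐_α(μ̂_n)} E_{p∼μ}[v_p^π(s)]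
  ≥ (1/n) ∑ᵢ v_{p̂ᵢ}^π(s) - L_{γ,β,R_max} α`,
with `L_{γ,β,R_max} = β γ R_max / (1-γ)²`. -/
theorem tabular_wdrmdp_sandwich {S A : Type} [Fintype S] [Fintype A]
    [Nonempty S] [Nonempty A]
    (r : S → A → ℝ) (Rmax γ β α : ℝ)
    (hr : ∀ s a, |r s a| ≤ Rmax)
    (hγ0 : 0 ≤ γ) (hγ1 : γ < 1) (hα : 0 ≤ α) (hβ : 0 ≤ β)
    (N : Model S A → ℝ)
    (hN0 : ∀ x, N x = 0 ↔ x = 0)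
    (hNadd : ∀ x y, N (x + y) ≤ N x + N y)
    (hNsmul : ∀ (c : ℝ) x, N (c • x) = |c| * N x)
    (hβN : ∀ p : Model S A, ∑ s, (⨆ a : A, ∑ s', |p s a s'|) ≤ β * N p)
    (π : S → A)
    (val : Model S A → S → ℝ)
    (hval : ∀ p, IsKernel p →
      ∀ s, val p s = r s (π s) + γ * ∑ s', p s (π s) s' * val p s')
    (n : ℕ) (hn : 0 < n)
    (phat : Fin n → Model S A) (hphat : ∀ i, IsKernel (phat i))
    (s : S) :
    (1 / n : ℝ) * (∑ i : Fin n, val (phat i) s) ≥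
      (⨅ μ : {μ : Measure (Model S A) //
          IsProbabilityMeasure μ ∧ μ {p : Model S A | ¬ IsKernel p} = 0 ∧
          wassDist N (empiricalM n phat) μ ≤ α},
        ∫ p, val p s ∂(μ : Measure (Model S A))) ∧
    (⨅ μ : {μ : Measure (Model S A) //
        IsProbabilityMeasure μ ∧ μ {p : Model S A | ¬ IsKernel p} = 0 ∧
        wassDist N (empiricalM n phat) μ ≤ α},
      ∫ p, val p s ∂(μ : Measure (Model S A))) ≥
        (1 / n : ℝ) * (∑ i : Fin n, val (phat i) s) -
          β * γ * Rmax / (1 - γ) ^ 2 * α :=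
  tabular_wdrmdp_sandwich_general r Rmax γ β α hr hγ0 hγ1 hα hβ N hNadd hNsmul hβN π val hval n hn
    phat hphat s
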